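/- Adequacy of the calculus ME_F¹ for four-valued minimal entailment with 𝓘 = {b}: for finite F-theories Γ and Δ, Γ ⊨^{b}_F Δ holds if and only if the sequent ∅;Γ,∅̄⇒Δ;Var(Γ∪Δ) is provable in ME_F¹, where Var(Γ∪Δ) is the set of all atoms occurring in formulas of Γ or Δ. -/

import Mathlib

/-- Truth values of the four-valued logic F: f, n, b, t, where in the truth
order f is least, t is greatest, and n, b are incomparable. -/
inductive V4 : Type
  | f | n | b | t
deriving DecidableEq, Repr

namespace V4

/-- Negation: f ↦ t, t ↦ f, and n, b are fixed. -/
def negv : V4 → V4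
  | .f => .t
  | .t => .f
  | .n => .n
  | .b => .b

/-- Conjunction: the meet with respect to the truth order (f least, t
greatest, n and b incomparable, so the meet of n and b is f). -/
def conjv : V4 → V4 → V4
  | .t, y => y
  | .f, _ => .f
  | .n, .t => .n
  | .n, .n => .n
  | .n, .b => .f
  | .n, .f => .f
  | .b, .t => .b
  | .b, .b => .b
  | .b, .n => .f
  | .b, .f => .f

/-- Implication: `x ⊃ y` is `y` if `x` is designated (b or t), and `t`
otherwise. -/
def impv : V4 → V4 → V4
  | .b, y => y
  | .t, y => y
  | .f, _ => .t
  | .n, _ => .t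

end V4

/-- Formulas of the four-valued logic F, with atoms indexed by ℕ, the
constants B and N, negation, conjunction, and implication. -/
inductive FForm : Type
  | atom : ℕ → FForm
  | bb : FForm
  | nn : FForm
  | neg : FForm → FForm
  | conj : FForm → FForm → FForm
  | imp : FForm → FForm → FForm
deriving DecidableEq

namespace FForm

/-- The valuation of F extending an interpretation `I : ℕ → V4`. -/
def val (I : ℕ → V4) : FForm → V4
  | atom p => I p
  | bb => .b
  | nn => .n
  | neg φ => (φ.val I).negv
  | conj φ ψ => (φ.val I).conjv (ψ.val I)
  | imp φ ψ => (φ.val I).impv (ψ.val I)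

/-- `I` is an F-model of `φ`: `v_I(φ)` is designated, i.e. b or t. -/
def IsModel (I : ℕ → V4) (φ : FForm) : Prop := φ.val I = .b ∨ φ.val I = .t

/-- `I` is an F-model of the theory `Γ`. -/
def IsModelSet (I : ℕ → V4) (Γ : Set FForm) : Prop := ∀ φ ∈ Γ, IsModel I φ

end FForm

/-- An F-sequent `Γ₁ | Γ₂ | Γ₃ | Γ₄` is true under `I` if some formula of `Γ₁`
takes value f, or of `Γ₂` value n, or of `Γ₃` value b, or of `Γ₄` value t. -/
def FSeqTrue (I : ℕ → V4) (Γ₁ Γ₂ Γ₃ Γ₄ : Finset FForm) : Prop :=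
  (∃ φ ∈ Γ₁, φ.val I = .f) ∨ (∃ φ ∈ Γ₂, φ.val I = .n) ∨
  (∃ φ ∈ Γ₃, φ.val I = .b) ∨ (∃ φ ∈ Γ₄, φ.val I = .t)

/-- An F-sequent is valid if it is true under every interpretation. -/
def FSeqValid (Γ₁ Γ₂ Γ₃ Γ₄ : Finset FForm) : Prop := ∀ I, FSeqTrue I Γ₁ Γ₂ Γ₃ Γ₄

/-- The sequent calculus `S_F` for the four-valued logic F (components in the
order f | n | b | t). -/
inductive SF : Finset FForm → Finset FForm → Finset FForm → Finset FForm → Prop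
  | ax (Γ Δ Θ Ω : Finset FForm) (φ : FForm) :
      SF (insert φ Γ) (insert φ Δ) (insert φ Θ) (insert φ Ω)
  | axN (Γ Δ Θ Ω : Finset FForm) :
      SF Γ (insert .nn Δ) Θ Ω
  | axB (Γ Δ Θ Ω : Finset FForm) :
      SF Γ Δ (insert .bb Θ) Ω
  | negF {Γ Δ Θ Ω : Finset FForm} {φ : FForm} :
      SF Γ Δ Θ (insert φ Ω) → SF (insert (.neg φ) Γ) Δ Θ Ω
  | negN {Γ Δ Θ Ω : Finset FForm} {φ : FForm} :
      SF Γ (insert φ Δ) Θ Ω → SF Γ (insert (.neg φ) Δ) Θ Ω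
  | negB {Γ Δ Θ Ω : Finset FForm} {φ : FForm} :
      SF Γ Δ (insert φ Θ) Ω → SF Γ Δ (insert (.neg φ) Θ) Ω
  | negT {Γ Δ Θ Ω : Finset FForm} {φ : FForm} :
      SF (insert φ Γ) Δ Θ Ω → SF Γ Δ Θ (insert (.neg φ) Ω)
  | conjF {Γ Δ Θ Ω : Finset FForm} {φ ψ : FForm} :
      SF (insert φ (insert ψ Γ)) (insert φ (insert ψ Δ)) Θ Ω →
      SF (insert φ (insert ψ Γ)) Δ (insert φ (insert ψ Θ)) Ω →
      SF (insert (.conj φ ψ) Γ) Δ Θ Ω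
  | conjN {Γ Δ Θ Ω : Finset FForm} {φ ψ : FForm} :
      SF Γ (insert φ (insert ψ Δ)) Θ Ω →
      SF Γ (insert φ Δ) Θ (insert φ Ω) →
      SF Γ (insert ψ Δ) Θ (insert ψ Ω) →
      SF Γ (insert (.conj φ ψ) Δ) Θ Ω
  | conjB {Γ Δ Θ Ω : Finset FForm} {φ ψ : FForm} :
      SF Γ Δ (insert φ (insert ψ Θ)) Ω →
      SF Γ Δ (insert φ Θ) (insert φ Ω) →
      SF Γ Δ (insert ψ Θ) (insert ψ Ω) →
      SF Γ Δ (insert (.conj φ ψ) Θ) Ω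
  | conjT {Γ Δ Θ Ω : Finset FForm} {φ ψ : FForm} :
      SF Γ Δ Θ (insert φ Ω) → SF Γ Δ Θ (insert ψ Ω) →
      SF Γ Δ Θ (insert (.conj φ ψ) Ω)
  | impF {Γ Δ Θ Ω : Finset FForm} {φ ψ : FForm} :
      SF Γ Δ (insert φ Θ) (insert φ Ω) → SF (insert ψ Γ) Δ Θ Ω →
      SF (insert (.imp φ ψ) Γ) Δ Θ Ω
  | impN {Γ Δ Θ Ω : Finset FForm} {φ ψ : FForm} :
      SF Γ Δ (insert φ Θ) (insert φ Ω) → SF Γ (insert ψ Δ) Θ Ω →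
      SF Γ (insert (.imp φ ψ) Δ) Θ Ω
  | impB {Γ Δ Θ Ω : Finset FForm} {φ ψ : FForm} :
      SF Γ Δ (insert φ Θ) (insert φ Ω) → SF Γ Δ (insert ψ Θ) Ω →
      SF Γ Δ (insert (.imp φ ψ) Θ) Ω
  | impT {Γ Δ Θ Ω : Finset FForm} {φ ψ : FForm} :
      SF (insert φ Γ) (insert φ Δ) Θ (insert ψ Ω) →
      SF Γ Δ Θ (insert (.imp φ ψ) Ω)
  | wF {Γ Δ Θ Ω : Finset FForm} (φ : FForm) :
      SF Γ Δ Θ Ω → SF (insert φ Γ) Δ Θ Ω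
  | wN {Γ Δ Θ Ω : Finset FForm} (φ : FForm) :
      SF Γ Δ Θ Ω → SF Γ (insert φ Δ) Θ Ω
  | wB {Γ Δ Θ Ω : Finset FForm} (φ : FForm) :
      SF Γ Δ Θ Ω → SF Γ Δ (insert φ Θ) Ω
  | wT {Γ Δ Θ Ω : Finset FForm} (φ : FForm) :
      SF Γ Δ Θ Ω → SF Γ Δ Θ (insert φ Ω)


/-- An F-anti-sequent `Γ₁ ∤ Γ₂ ∤ Γ₃ ∤ Γ₄` is refuted by `I` if no formula of
`Γ₁` takes value f, none of `Γ₂` value n, none of `Γ₃` value b, and none of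
`Γ₄` value t. -/
def FAntiRefutedBy (I : ℕ → V4) (Γ₁ Γ₂ Γ₃ Γ₄ : Finset FForm) : Prop :=
  (∀ φ ∈ Γ₁, φ.val I ≠ .f) ∧ (∀ φ ∈ Γ₂, φ.val I ≠ .n) ∧
  (∀ φ ∈ Γ₃, φ.val I ≠ .b) ∧ (∀ φ ∈ Γ₄, φ.val I ≠ .t)

/-- An F-anti-sequent is refutable if some interpretation refutes it. -/
def FAntiRefutable (Γ₁ Γ₂ Γ₃ Γ₄ : Finset FForm) : Prop :=
  ∃ I, FAntiRefutedBy I Γ₁ Γ₂ Γ₃ Γ₄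

/-- A formula that is an atom or one of the constants B, N. -/
def FForm.IsBasic : FForm → Prop
  | .atom _ => True
  | .bb => True
  | .nn => True
  | _ => False

/-- The anti-sequent calculus `R_F` for the four-valued logic F (components in
the order f ∤ n ∤ b ∤ t). -/
inductive RF : Finset FForm → Finset FForm → Finset FForm → Finset FForm → Prop
  | ax (Γ Δ Θ Ω : Finset FForm) :
      (∀ φ ∈ Γ ∪ Δ ∪ Θ ∪ Ω, φ.IsBasic) → Γ ∩ Δ ∩ Θ ∩ Ω = ∅ →
      .nn ∉ Δ → .bb ∉ Θ →
      RF Γ Δ Θ Ω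
  | negF {Γ Δ Θ Ω : Finset FForm} {φ : FForm} :
      RF Γ Δ Θ (insert φ Ω) → RF (insert (.neg φ) Γ) Δ Θ Ω
  | negN {Γ Δ Θ Ω : Finset FForm} {φ : FForm} :
      RF Γ (insert φ Δ) Θ Ω → RF Γ (insert (.neg φ) Δ) Θ Ω
  | negB {Γ Δ Θ Ω : Finset FForm} {φ : FForm} :
      RF Γ Δ (insert φ Θ) Ω → RF Γ Δ (insert (.neg φ) Θ) Ω
  | negT {Γ Δ Θ Ω : Finset FForm} {φ : FForm} :
      RF (insert φ Γ) Δ Θ Ω → RF Γ Δ Θ (insert (.neg φ) Ω)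
  | conjF1 {Γ Δ Θ Ω : Finset FForm} {φ ψ : FForm} :
      RF (insert φ (insert ψ Γ)) (insert φ (insert ψ Δ)) Θ Ω →
      RF (insert (.conj φ ψ) Γ) Δ Θ Ω
  | conjF2 {Γ Δ Θ Ω : Finset FForm} {φ ψ : FForm} :
      RF (insert φ (insert ψ Γ)) Δ (insert φ (insert ψ Θ)) Ω →
      RF (insert (.conj φ ψ) Γ) Δ Θ Ω
  | conjN1 {Γ Δ Θ Ω : Finset FForm} {φ ψ : FForm} :
      RF Γ (insert φ (insert ψ Δ)) Θ Ω → RF Γ (insert (.conj φ ψ) Δ) Θ Ω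
  | conjN2 {Γ Δ Θ Ω : Finset FForm} {φ ψ : FForm} :
      RF Γ (insert φ Δ) Θ (insert φ Ω) → RF Γ (insert (.conj φ ψ) Δ) Θ Ω
  | conjN3 {Γ Δ Θ Ω : Finset FForm} {φ ψ : FForm} :
      RF Γ (insert ψ Δ) Θ (insert ψ Ω) → RF Γ (insert (.conj φ ψ) Δ) Θ Ω
  | conjB1 {Γ Δ Θ Ω : Finset FForm} {φ ψ : FForm} :
      RF Γ Δ (insert φ (insert ψ Θ)) Ω → RF Γ Δ (insert (.conj φ ψ) Θ) Ω
  | conjB2 {Γ Δ Θ Ω : Finset FForm} {φ ψ : FForm} :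
      RF Γ Δ (insert φ Θ) (insert φ Ω) → RF Γ Δ (insert (.conj φ ψ) Θ) Ω
  | conjB3 {Γ Δ Θ Ω : Finset FForm} {φ ψ : FForm} :
      RF Γ Δ (insert ψ Θ) (insert ψ Ω) → RF Γ Δ (insert (.conj φ ψ) Θ) Ω
  | conjT1 {Γ Δ Θ Ω : Finset FForm} {φ ψ : FForm} :
      RF Γ Δ Θ (insert φ Ω) → RF Γ Δ Θ (insert (.conj φ ψ) Ω)
  | conjT2 {Γ Δ Θ Ω : Finset FForm} {φ ψ : FForm} :
      RF Γ Δ Θ (insert ψ Ω) → RF Γ Δ Θ (insert (.conj φ ψ) Ω)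
  | impF1 {Γ Δ Θ Ω : Finset FForm} {φ ψ : FForm} :
      RF Γ Δ (insert φ Θ) (insert φ Ω) → RF (insert (.imp φ ψ) Γ) Δ Θ Ω
  | impF2 {Γ Δ Θ Ω : Finset FForm} {φ ψ : FForm} :
      RF (insert ψ Γ) Δ Θ Ω → RF (insert (.imp φ ψ) Γ) Δ Θ Ω
  | impN1 {Γ Δ Θ Ω : Finset FForm} {φ ψ : FForm} :
      RF Γ Δ (insert φ Θ) (insert φ Ω) → RF Γ (insert (.imp φ ψ) Δ) Θ Ω
  | impN2 {Γ Δ Θ Ω : Finset FForm} {φ ψ : FForm} :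
      RF Γ (insert ψ Δ) Θ Ω → RF Γ (insert (.imp φ ψ) Δ) Θ Ω
  | impB1 {Γ Δ Θ Ω : Finset FForm} {φ ψ : FForm} :
      RF Γ Δ (insert φ Θ) (insert φ Ω) → RF Γ Δ (insert (.imp φ ψ) Θ) Ω
  | impB2 {Γ Δ Θ Ω : Finset FForm} {φ ψ : FForm} :
      RF Γ Δ (insert ψ Θ) Ω → RF Γ Δ (insert (.imp φ ψ) Θ) Ω
  | impT {Γ Δ Θ Ω : Finset FForm} {φ ψ : FForm} :
      RF (insert φ Γ) (insert φ Δ) Θ (insert ψ Ω) →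
      RF Γ Δ Θ (insert (.imp φ ψ) Ω)


/-- The set of atoms occurring in an F-formula. -/
def FForm.fvars : FForm → Finset ℕ
  | .atom p => {p}
  | .bb => ∅
  | .nn => ∅
  | .neg φ => φ.fvars
  | .conj φ ψ => φ.fvars ∪ ψ.fvars
  | .imp φ ψ => φ.fvars ∪ ψ.fvars

/-- `I` is an F-model of `Γ` that is most consistent relative to `𝓘 ⊆ V4`:
no F-model `J` of `Γ` makes a strictly smaller set of atoms take a value
in `𝓘`. -/
def FMostConsistentModel (𝓘 : Set V4) (I : ℕ → V4) (Γ : Set FForm) : Prop :=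
  FForm.IsModelSet I Γ ∧
    ¬ ∃ J : ℕ → V4, FForm.IsModelSet J Γ ∧ {p : ℕ | J p ∈ 𝓘} ⊂ {p : ℕ | I p ∈ 𝓘}

/-- `Γ ⊨^𝓘_F Δ`: every F-model of `Γ` most consistent relative to `𝓘` is an
F-model of some member of `Δ`. -/
def FMinEntails (𝓘 : Set V4) (Γ Δ : Set FForm) : Prop :=
  ∀ I, FMostConsistentModel 𝓘 I Γ → ∃ δ ∈ Δ, FForm.IsModel I δ

/-- The calculus `ME_F¹` on sequents `Σ;Γ,Π̄⇒Δ;Θ` (arguments in the order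
`Σ Γ Π Δ Θ`, where `Π` records the atoms required not to take a value in
`𝓘 = {b}`), with rules (m1†), (m2†) and (m3). -/
inductive MEF1 : Finset ℕ → Finset FForm → Finset ℕ → Finset FForm → Finset ℕ → Prop
  | m1 {S Pi Θ : Finset ℕ} {Γ Δ : Finset FForm} {q : ℕ} :
      RF Γ Γ ((insert q (Θ ∪ Pi)).image FForm.atom) ∅ →
      MEF1 (insert q S) Γ Pi Δ Θ
  | m2 {S Pi Θ : Finset ℕ} {Γ Δ : Finset FForm} :
      SF (S.image FForm.atom ∪ Γ) (S.image FForm.atom ∪ Γ)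
         (Pi.image FForm.atom ∪ Δ) (S.image FForm.atom ∪ Δ) →
      MEF1 S Γ Pi Δ Θ
  | m3 {S Pi Θ : Finset ℕ} {Γ Δ : Finset FForm} {q : ℕ} :
      MEF1 (insert q S) Γ Pi Δ Θ →
      MEF1 S Γ (insert q Pi) Δ Θ →
      MEF1 S Γ Pi Δ (insert q Θ)


/-!
Every rule of `S_F` is invertible: under each interpretation the conclusion is true iff all
premises are, and the rules of `R_F` are exactly the single-premise inversions. Hence both calculi
are sound, and backward proof search, which strictly decreases a weight, ends either in an
`S_F`-proof or an `R_F`-proof; so `S_F` proves exactly the valid sequents and `R_F` exactly the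
refutable anti-sequents.

Read `Σ;Γ,Π̄⇒Δ;Θ` as: every `{b}`-most consistent model of `Γ` that is `b` on `Σ` and not `b` on
`Π` models some member of `Δ`. Rule (m3) splits on whether an atom of `Θ` is `b`, so it suffices
to treat `Θ = ∅` with `Σ ∪ Π` covering all atoms of `Γ ∪ Δ`. Resetting every other atom to `n`
changes no relevant value, so the models in question have `b`-set exactly `Σ`. Such a model
fails to be most consistent iff some model of `Γ` avoids `b` on `Π` and on one `q ∈ Σ`, that is,
iff an (m1†)-premise is refutable; otherwise the sequent holds iff the (m2†)-premise is valid.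
-/

section Semantics

variable {I : ℕ → V4} {Γ Δ Θ Ω : Finset FForm} {φ ψ : FForm}

@[simp]
theorem fSeqTrue_insert_f :
    FSeqTrue I (insert φ Γ) Δ Θ Ω ↔ φ.val I = .f ∨ FSeqTrue I Γ Δ Θ Ω := by
  simp only [FSeqTrue, Finset.exists_mem_insert, or_assoc]

@[simp]
theorem fSeqTrue_insert_n :
    FSeqTrue I Γ (insert φ Δ) Θ Ω ↔ φ.val I = .n ∨ FSeqTrue I Γ Δ Θ Ω := by
  simp only [FSeqTrue, Finset.exists_mem_insert, or_assoc, or_left_comm]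

@[simp]
theorem fSeqTrue_insert_b :
    FSeqTrue I Γ Δ (insert φ Θ) Ω ↔ φ.val I = .b ∨ FSeqTrue I Γ Δ Θ Ω := by
  simp only [FSeqTrue, Finset.exists_mem_insert, or_assoc, or_left_comm]

@[simp]
theorem fSeqTrue_insert_t :
    FSeqTrue I Γ Δ Θ (insert φ Ω) ↔ φ.val I = .t ∨ FSeqTrue I Γ Δ Θ Ω := by
  simp only [FSeqTrue, Finset.exists_mem_insert, or_left_comm]

theorem fAntiRefutedBy_iff_not_fSeqTrue :
    FAntiRefutedBy I Γ Δ Θ Ω ↔ ¬ FSeqTrue I Γ Δ Θ Ω := by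
  simp only [FAntiRefutedBy, FSeqTrue, not_or, not_exists, not_and]

theorem fAntiRefutable_iff_not_fSeqValid :
    FAntiRefutable Γ Δ Θ Ω ↔ ¬ FSeqValid Γ Δ Θ Ω := by
  simp only [FAntiRefutable, FSeqValid, fAntiRefutedBy_iff_not_fSeqTrue, not_forall]

theorem fSeqTrue_insert_neg_f :
    FSeqTrue I (insert (.neg φ) Γ) Δ Θ Ω ↔ FSeqTrue I Γ Δ Θ (insert φ Ω) := by
  cases h : φ.val I <;> simp [FForm.val, h, V4.negv]

theorem fSeqTrue_insert_neg_n :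
    FSeqTrue I Γ (insert (.neg φ) Δ) Θ Ω ↔ FSeqTrue I Γ (insert φ Δ) Θ Ω := by
  cases h : φ.val I <;> simp [FForm.val, h, V4.negv]

theorem fSeqTrue_insert_neg_b :
    FSeqTrue I Γ Δ (insert (.neg φ) Θ) Ω ↔ FSeqTrue I Γ Δ (insert φ Θ) Ω := by
  cases h : φ.val I <;> simp [FForm.val, h, V4.negv]

theorem fSeqTrue_insert_neg_t :
    FSeqTrue I Γ Δ Θ (insert (.neg φ) Ω) ↔ FSeqTrue I (insert φ Γ) Δ Θ Ω := by
  cases h : φ.val I <;> simp [FForm.val, h, V4.negv]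

theorem fSeqTrue_insert_conj_f :
    FSeqTrue I (insert (.conj φ ψ) Γ) Δ Θ Ω ↔
      FSeqTrue I (insert φ (insert ψ Γ)) (insert φ (insert ψ Δ)) Θ Ω ∧
      FSeqTrue I (insert φ (insert ψ Γ)) Δ (insert φ (insert ψ Θ)) Ω := by
  cases hφ : φ.val I <;> cases hψ : ψ.val I <;> simp [FForm.val, hφ, hψ, V4.conjv]

theorem fSeqTrue_insert_conj_n :
    FSeqTrue I Γ (insert (.conj φ ψ) Δ) Θ Ω ↔
      FSeqTrue I Γ (insert φ (insert ψ Δ)) Θ Ω ∧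
      FSeqTrue I Γ (insert φ Δ) Θ (insert φ Ω) ∧
      FSeqTrue I Γ (insert ψ Δ) Θ (insert ψ Ω) := by
  cases hφ : φ.val I <;> cases hψ : ψ.val I <;> simp [FForm.val, hφ, hψ, V4.conjv]

theorem fSeqTrue_insert_conj_b :
    FSeqTrue I Γ Δ (insert (.conj φ ψ) Θ) Ω ↔
      FSeqTrue I Γ Δ (insert φ (insert ψ Θ)) Ω ∧
      FSeqTrue I Γ Δ (insert φ Θ) (insert φ Ω) ∧
      FSeqTrue I Γ Δ (insert ψ Θ) (insert ψ Ω) := by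
  cases hφ : φ.val I <;> cases hψ : ψ.val I <;> simp [FForm.val, hφ, hψ, V4.conjv]

theorem fSeqTrue_insert_conj_t :
    FSeqTrue I Γ Δ Θ (insert (.conj φ ψ) Ω) ↔
      FSeqTrue I Γ Δ Θ (insert φ Ω) ∧ FSeqTrue I Γ Δ Θ (insert ψ Ω) := by
  cases hφ : φ.val I <;> cases hψ : ψ.val I <;> simp [FForm.val, hφ, hψ, V4.conjv]

theorem fSeqTrue_insert_imp_f :
    FSeqTrue I (insert (.imp φ ψ) Γ) Δ Θ Ω ↔
      FSeqTrue I Γ Δ (insert φ Θ) (insert φ Ω) ∧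
      FSeqTrue I (insert ψ Γ) Δ Θ Ω := by
  cases hφ : φ.val I <;> cases hψ : ψ.val I <;> simp [FForm.val, hφ, hψ, V4.impv]

theorem fSeqTrue_insert_imp_n :
    FSeqTrue I Γ (insert (.imp φ ψ) Δ) Θ Ω ↔
      FSeqTrue I Γ Δ (insert φ Θ) (insert φ Ω) ∧
      FSeqTrue I Γ (insert ψ Δ) Θ Ω := by
  cases hφ : φ.val I <;> cases hψ : ψ.val I <;> simp [FForm.val, hφ, hψ, V4.impv]

theorem fSeqTrue_insert_imp_b :
    FSeqTrue I Γ Δ (insert (.imp φ ψ) Θ) Ω ↔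
      FSeqTrue I Γ Δ (insert φ Θ) (insert φ Ω) ∧
      FSeqTrue I Γ Δ (insert ψ Θ) Ω := by
  cases hφ : φ.val I <;> cases hψ : ψ.val I <;> simp [FForm.val, hφ, hψ, V4.impv]

theorem fSeqTrue_insert_imp_t :
    FSeqTrue I Γ Δ Θ (insert (.imp φ ψ) Ω) ↔
      FSeqTrue I (insert φ Γ) (insert φ Δ) Θ (insert ψ Ω) := by
  cases hφ : φ.val I <;> cases hψ : ψ.val I <;> simp [FForm.val, hφ, hψ, V4.impv]

end Semantics

theorem SF.sound {Γ₁ Γ₂ Γ₃ Γ₄ : Finset FForm} (h : SF Γ₁ Γ₂ Γ₃ Γ₄) :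
    FSeqValid Γ₁ Γ₂ Γ₃ Γ₄ := by
  induction h with
  | ax _ _ _ _ φ => intro I; cases h : φ.val I <;> simp [h]
  | axN | axB => intro I; simp [FForm.val]
  | negF _ ih => exact fun I => fSeqTrue_insert_neg_f.2 (ih I)
  | negN _ ih => exact fun I => fSeqTrue_insert_neg_n.2 (ih I)
  | negB _ ih => exact fun I => fSeqTrue_insert_neg_b.2 (ih I)
  | negT _ ih => exact fun I => fSeqTrue_insert_neg_t.2 (ih I)
  | conjF _ _ ih₁ ih₂ => exact fun I => fSeqTrue_insert_conj_f.2 ⟨ih₁ I, ih₂ I⟩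
  | conjN _ _ _ ih₁ ih₂ ih₃ =>
    exact fun I => fSeqTrue_insert_conj_n.2 ⟨ih₁ I, ih₂ I, ih₃ I⟩
  | conjB _ _ _ ih₁ ih₂ ih₃ =>
    exact fun I => fSeqTrue_insert_conj_b.2 ⟨ih₁ I, ih₂ I, ih₃ I⟩
  | conjT _ _ ih₁ ih₂ => exact fun I => fSeqTrue_insert_conj_t.2 ⟨ih₁ I, ih₂ I⟩
  | impF _ _ ih₁ ih₂ => exact fun I => fSeqTrue_insert_imp_f.2 ⟨ih₁ I, ih₂ I⟩
  | impN _ _ ih₁ ih₂ => exact fun I => fSeqTrue_insert_imp_n.2 ⟨ih₁ I, ih₂ I⟩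
  | impB _ _ ih₁ ih₂ => exact fun I => fSeqTrue_insert_imp_b.2 ⟨ih₁ I, ih₂ I⟩
  | impT _ ih => exact fun I => fSeqTrue_insert_imp_t.2 (ih I)
  | wF _ _ ih | wN _ _ ih | wB _ _ ih | wT _ _ ih => intro I; simp [ih I]

-- No atom lies in all four components, so none lands in the component of its value.
def refutingInterp (Γ₁ Γ₂ Γ₃ : Finset FForm) (p : ℕ) : V4 :=
  if FForm.atom p ∉ Γ₁ then .f
  else if FForm.atom p ∉ Γ₂ then .n
  else if FForm.atom p ∉ Γ₃ then .b
  else .t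

theorem not_fSeqTrue_refutingInterp {Γ₁ Γ₂ Γ₃ Γ₄ : Finset FForm}
    (hbasic : ∀ φ ∈ Γ₁ ∪ Γ₂ ∪ Γ₃ ∪ Γ₄, φ.IsBasic) (hempty : Γ₁ ∩ Γ₂ ∩ Γ₃ ∩ Γ₄ = ∅)
    (hN : FForm.nn ∉ Γ₂) (hB : FForm.bb ∉ Γ₃) :
    ¬ FSeqTrue (refutingInterp Γ₁ Γ₂ Γ₃) Γ₁ Γ₂ Γ₃ Γ₄ := by
  have hnot : ∀ φ ∈ Γ₁, φ ∈ Γ₂ → φ ∈ Γ₃ → φ ∉ Γ₄ := fun φ h₁ h₂ h₃ h₄ =>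
    Finset.notMem_empty φ (hempty ▸ by simp [h₁, h₂, h₃, h₄])
  rintro (⟨φ, hφ, hv⟩ | ⟨φ, hφ, hv⟩ | ⟨φ, hφ, hv⟩ | ⟨φ, hφ, hv⟩) <;>
  · have := hbasic φ (by simp [hφ])
    match φ with
    | .atom p =>
      simp only [FForm.val, refutingInterp] at hv
      split_ifs at hv <;> simp_all
    | .bb | .nn => simp_all [FForm.val]

theorem RF.sound {Γ₁ Γ₂ Γ₃ Γ₄ : Finset FForm} (h : RF Γ₁ Γ₂ Γ₃ Γ₄) :
    FAntiRefutable Γ₁ Γ₂ Γ₃ Γ₄ := by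
  rw [fAntiRefutable_iff_not_fSeqValid]
  induction h with
  | ax _ _ _ _ hbasic hempty hN hB =>
    exact fun hv => not_fSeqTrue_refutingInterp hbasic hempty hN hB (hv _)
  | negF _ ih => exact fun hv => ih fun I => fSeqTrue_insert_neg_f.1 (hv I)
  | negN _ ih => exact fun hv => ih fun I => fSeqTrue_insert_neg_n.1 (hv I)
  | negB _ ih => exact fun hv => ih fun I => fSeqTrue_insert_neg_b.1 (hv I)
  | negT _ ih => exact fun hv => ih fun I => fSeqTrue_insert_neg_t.1 (hv I)
  | conjF1 _ ih => exact fun hv => ih fun I => (fSeqTrue_insert_conj_f.1 (hv I)).1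
  | conjF2 _ ih => exact fun hv => ih fun I => (fSeqTrue_insert_conj_f.1 (hv I)).2
  | conjN1 _ ih => exact fun hv => ih fun I => (fSeqTrue_insert_conj_n.1 (hv I)).1
  | conjN2 _ ih => exact fun hv => ih fun I => (fSeqTrue_insert_conj_n.1 (hv I)).2.1
  | conjN3 _ ih => exact fun hv => ih fun I => (fSeqTrue_insert_conj_n.1 (hv I)).2.2
  | conjB1 _ ih => exact fun hv => ih fun I => (fSeqTrue_insert_conj_b.1 (hv I)).1
  | conjB2 _ ih => exact fun hv => ih fun I => (fSeqTrue_insert_conj_b.1 (hv I)).2.1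
  | conjB3 _ ih => exact fun hv => ih fun I => (fSeqTrue_insert_conj_b.1 (hv I)).2.2
  | conjT1 _ ih => exact fun hv => ih fun I => (fSeqTrue_insert_conj_t.1 (hv I)).1
  | conjT2 _ ih => exact fun hv => ih fun I => (fSeqTrue_insert_conj_t.1 (hv I)).2
  | impF1 _ ih => exact fun hv => ih fun I => (fSeqTrue_insert_imp_f.1 (hv I)).1
  | impF2 _ ih => exact fun hv => ih fun I => (fSeqTrue_insert_imp_f.1 (hv I)).2
  | impN1 _ ih => exact fun hv => ih fun I => (fSeqTrue_insert_imp_n.1 (hv I)).1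
  | impN2 _ ih => exact fun hv => ih fun I => (fSeqTrue_insert_imp_n.1 (hv I)).2
  | impB1 _ ih => exact fun hv => ih fun I => (fSeqTrue_insert_imp_b.1 (hv I)).1
  | impB2 _ ih => exact fun hv => ih fun I => (fSeqTrue_insert_imp_b.1 (hv I)).2
  | impT _ ih => exact fun hv => ih fun I => fSeqTrue_insert_imp_t.1 (hv I)

theorem or_of_or_of_or {a a' b b' c c' : Prop} (ha : a ∨ a') (hb : b ∨ b') (h : a → b → c)
    (ha' : a' → c') (hb' : b' → c') : c ∨ c' := by
  tauto

theorem or_of_or_of_or_of_or {a a' b b' c c' d d' : Prop} (ha : a ∨ a') (hb : b ∨ b')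
    (hc : c ∨ c') (h : a → b → c → d) (ha' : a' → d') (hb' : b' → d') (hc' : c' → d') :
    d ∨ d' := by
  tauto

-- A premise may contain both immediate subformulas in two components.
def FForm.weight : FForm → ℕ
  | .atom _ | .bb | .nn => 1
  | .neg φ => φ.weight + 1
  | .conj φ ψ | .imp φ ψ => 2 * (φ.weight + ψ.weight) + 1

def seqWeight (Γ₁ Γ₂ Γ₃ Γ₄ : Finset FForm) : ℕ :=
  ∑ φ ∈ Γ₁, φ.weight + ∑ φ ∈ Γ₂, φ.weight + ∑ φ ∈ Γ₃, φ.weight + ∑ φ ∈ Γ₄, φ.weight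

theorem FForm.sum_weight_insert (φ : FForm) (Γ : Finset FForm) :
    ∑ ψ ∈ insert φ Γ, ψ.weight =
      if φ ∈ Γ then ∑ ψ ∈ Γ, ψ.weight else φ.weight + ∑ ψ ∈ Γ, ψ.weight := by
  split_ifs with h
  · rw [Finset.insert_eq_of_mem h]
  · rw [Finset.sum_insert h]

theorem sf_or_rf_of_isBasic {Γ₁ Γ₂ Γ₃ Γ₄ : Finset FForm}
    (hbasic : ∀ φ ∈ Γ₁ ∪ Γ₂ ∪ Γ₃ ∪ Γ₄, φ.IsBasic) : SF Γ₁ Γ₂ Γ₃ Γ₄ ∨ RF Γ₁ Γ₂ Γ₃ Γ₄ := by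
  by_cases hN : FForm.nn ∈ Γ₂
  · exact .inl (Finset.insert_erase hN ▸ SF.axN _ _ _ _)
  by_cases hB : FForm.bb ∈ Γ₃
  · exact .inl (Finset.insert_erase hB ▸ SF.axB _ _ _ _)
  rcases (Γ₁ ∩ Γ₂ ∩ Γ₃ ∩ Γ₄).eq_empty_or_nonempty with hempty | ⟨φ, hφ⟩
  · exact .inr (RF.ax _ _ _ _ hbasic hempty hN hB)
  · simp only [Finset.mem_inter] at hφ
    obtain ⟨⟨⟨h₁, h₂⟩, h₃⟩, h₄⟩ := hφ
    rw [← Finset.insert_erase h₁, ← Finset.insert_erase h₂, ← Finset.insert_erase h₃,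
      ← Finset.insert_erase h₄]
    exact .inl (SF.ax _ _ _ _ φ)

theorem sf_or_rf (Γ₁ Γ₂ Γ₃ Γ₄ : Finset FForm) : SF Γ₁ Γ₂ Γ₃ Γ₄ ∨ RF Γ₁ Γ₂ Γ₃ Γ₄ := by
  induction hn : seqWeight Γ₁ Γ₂ Γ₃ Γ₄ using Nat.strong_induction_on
    generalizing Γ₁ Γ₂ Γ₃ Γ₄ with
  | _ n ih =>
  by_cases hbasic : ∀ φ ∈ Γ₁ ∪ Γ₂ ∪ Γ₃ ∪ Γ₄, φ.IsBasic
  · exact sf_or_rf_of_isBasic hbasic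
  obtain ⟨φ, hmem, hφ⟩ := not_forall₂.1 hbasic
  replace ih := fun Γ₁' Γ₂' Γ₃' Γ₄' (h : seqWeight Γ₁' Γ₂' Γ₃' Γ₄' < n) =>
    ih _ h Γ₁' Γ₂' Γ₃' Γ₄' rfl
  subst hn
  have hsplit : ∀ Γ : Finset FForm, φ ∈ Γ → ∃ Γ', φ ∉ Γ' ∧ Γ = insert φ Γ' :=
    fun Γ h => ⟨_, Finset.notMem_erase φ Γ, (Finset.insert_erase h).symm⟩
  simp only [Finset.mem_union] at hmem
  rcases hmem with ((h | h) | h) | h <;> obtain ⟨Γ', hφΓ', rfl⟩ := hsplit _ h <;> cases φ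
  -- Decompose the compound formula by its `S_F`-rule; if a premise is `R_F`-provable instead,
  -- the `R_F`-rule inverting that premise applies.
  all_goals first
    | exact absurd trivial hφ
    | refine (ih _ _ _ _ ?_).imp SF.negF RF.negF
    | refine (ih _ _ _ _ ?_).imp SF.negN RF.negN
    | refine (ih _ _ _ _ ?_).imp SF.negB RF.negB
    | refine (ih _ _ _ _ ?_).imp SF.negT RF.negT
    | refine or_of_or_of_or (ih _ _ _ _ ?_) (ih _ _ _ _ ?_) SF.conjF RF.conjF1 RF.conjF2
    | refine or_of_or_of_or_of_or (ih _ _ _ _ ?_) (ih _ _ _ _ ?_) (ih _ _ _ _ ?_) SF.conjN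
        RF.conjN1 RF.conjN2 RF.conjN3
    | refine or_of_or_of_or_of_or (ih _ _ _ _ ?_) (ih _ _ _ _ ?_) (ih _ _ _ _ ?_) SF.conjB
        RF.conjB1 RF.conjB2 RF.conjB3
    | refine or_of_or_of_or (ih _ _ _ _ ?_) (ih _ _ _ _ ?_) SF.conjT RF.conjT1 RF.conjT2
    | refine or_of_or_of_or (ih _ _ _ _ ?_) (ih _ _ _ _ ?_) SF.impF RF.impF1 RF.impF2
    | refine or_of_or_of_or (ih _ _ _ _ ?_) (ih _ _ _ _ ?_) SF.impN RF.impN1 RF.impN2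
    | refine or_of_or_of_or (ih _ _ _ _ ?_) (ih _ _ _ _ ?_) SF.impB RF.impB1 RF.impB2
    | refine (ih _ _ _ _ ?_).imp SF.impT RF.impT
  all_goals
    simp only [seqWeight, FForm.sum_weight_insert, hφΓ', if_false, FForm.weight]
    split_ifs <;> omega

theorem SF.complete {Γ₁ Γ₂ Γ₃ Γ₄ : Finset FForm} (h : FSeqValid Γ₁ Γ₂ Γ₃ Γ₄) :
    SF Γ₁ Γ₂ Γ₃ Γ₄ :=
  (sf_or_rf Γ₁ Γ₂ Γ₃ Γ₄).resolve_right fun hr => fAntiRefutable_iff_not_fSeqValid.1 hr.sound h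

theorem RF.complete {Γ₁ Γ₂ Γ₃ Γ₄ : Finset FForm} (h : FAntiRefutable Γ₁ Γ₂ Γ₃ Γ₄) :
    RF Γ₁ Γ₂ Γ₃ Γ₄ :=
  (sf_or_rf Γ₁ Γ₂ Γ₃ Γ₄).resolve_left fun hs => fAntiRefutable_iff_not_fSeqValid.1 h hs.sound

namespace FForm

theorem val_congr {I J : ℕ → V4} {φ : FForm} (h : ∀ p ∈ φ.fvars, I p = J p) :
    φ.val I = φ.val J := by
  induction φ with
  | atom p => exact h p (Finset.mem_singleton_self p)
  | bb | nn => rfl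
  | neg φ ih => simp only [val, ih h]
  | conj φ ψ ihφ ihψ | imp φ ψ ihφ ihψ =>
    simp only [fvars, Finset.mem_union] at h
    simp only [val, ihφ fun p hp => h p (.inl hp), ihψ fun p hp => h p (.inr hp)]

theorem val_piecewise {X : Finset ℕ} {I J : ℕ → V4} {φ : FForm} (h : φ.fvars ⊆ X) :
    φ.val (X.piecewise I J) = φ.val I :=
  val_congr fun _ hp => Finset.piecewise_eq_of_mem _ _ _ (h hp)

theorem isModel_iff_ne {I : ℕ → V4} {φ : FForm} :
    IsModel I φ ↔ φ.val I ≠ .f ∧ φ.val I ≠ .n := by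
  unfold IsModel; cases φ.val I <;> simp

theorem isModel_piecewise {X : Finset ℕ} {I J : ℕ → V4} {φ : FForm} (h : φ.fvars ⊆ X) :
    IsModel (X.piecewise I J) φ ↔ IsModel I φ := by
  rw [IsModel, IsModel, val_piecewise h]

theorem isModelSet_piecewise {X : Finset ℕ} {I J : ℕ → V4} {Γ : Finset FForm}
    (h : Γ.biUnion fvars ⊆ X) : IsModelSet (X.piecewise I J) Γ ↔ IsModelSet I Γ :=
  forall₂_congr fun _ hφ => isModel_piecewise ((Finset.subset_biUnion_of_mem fvars hφ).trans h)

end FForm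

open FForm

theorem fAntiRefutedBy_model_iff {J : ℕ → V4} {Γ : Finset FForm} {A : Finset ℕ} :
    FAntiRefutedBy J Γ Γ (A.image atom) ∅ ↔ IsModelSet J Γ ∧ ∀ p ∈ A, J p ≠ .b := by
  simp only [FAntiRefutedBy, IsModelSet, Finset.mem_coe, isModel_iff_ne, Finset.forall_mem_image,
    val, forall_and, Finset.notMem_empty, IsEmpty.forall_iff, implies_true, and_true, and_assoc]

theorem fAntiRefutedBy_countermodel_iff {I : ℕ → V4} {S Pi : Finset ℕ} {Γ Δ : Finset FForm} :
    FAntiRefutedBy I (S.image atom ∪ Γ) (S.image atom ∪ Γ) (Pi.image atom ∪ Δ)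
        (S.image atom ∪ Δ) ↔
      (∀ p ∈ S, I p = .b) ∧ IsModelSet I Γ ∧ (∀ p ∈ Pi, I p ≠ .b) ∧ ∀ δ ∈ Δ, ¬ IsModel I δ := by
  have hb : ∀ p, I p = .b ↔ I p ≠ .f ∧ I p ≠ .n ∧ I p ≠ .t := fun p => by cases I p <;> simp
  simp only [IsModel, not_or, ← ne_eq]
  simp only [FAntiRefutedBy, IsModelSet, Finset.mem_coe, isModel_iff_ne, hb,
    Finset.forall_mem_union, Finset.forall_mem_image, val, forall_and]
  tauto

-- `Θ` is absent: its atoms are only still to be split on by (m3).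
def MESeqValid (S : Finset ℕ) (Γ : Finset FForm) (Pi : Finset ℕ) (Δ : Finset FForm) : Prop :=
  ∀ I, FMostConsistentModel {V4.b} I Γ → (∀ p ∈ S, I p = .b) → (∀ p ∈ Pi, I p ≠ .b) →
    ∃ δ ∈ Δ, IsModel I δ

theorem MESeqValid.mono {S S' Pi Pi' : Finset ℕ} {Γ Δ : Finset FForm}
    (h : MESeqValid S Γ Pi Δ) (hS : S ⊆ S') (hPi : Pi ⊆ Pi') : MESeqValid S' Γ Pi' Δ :=
  fun I hI hS' hPi' => h I hI (fun p hp => hS' p (hS hp)) (fun p hp => hPi' p (hPi hp))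

theorem fMinEntails_iff_meSeqValid {Γ Δ : Finset FForm} :
    FMinEntails {V4.b} Γ Δ ↔ MESeqValid ∅ Γ ∅ Δ := by
  simp [FMinEntails, MESeqValid]

theorem piecewise_n_eq_b {X : Finset ℕ} {J : ℕ → V4} {p : ℕ} :
    X.piecewise J (fun _ => .n) p = .b ↔ p ∈ X ∧ J p = .b := by
  by_cases hp : p ∈ X <;> simp [hp]

theorem FMostConsistentModel.eq_b_of_subset {I J : ℕ → V4} {Γ : Set FForm}
    (hI : FMostConsistentModel {V4.b} I Γ) (hJ : IsModelSet J Γ)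
    (hsub : ∀ p, J p = .b → I p = .b) {q : ℕ} (hq : I q = .b) : J q = .b := by
  by_contra hJq
  exact hI.2 ⟨J, hJ, hsub, fun h => hJq (h hq)⟩

theorem fMostConsistentModel_of_not_fAntiRefutable {I : ℕ → V4} {Γ : Finset FForm}
    {S Pi : Finset ℕ} (hI : IsModelSet I Γ) (hS : ∀ p, I p = .b → p ∈ S)
    (hPi : ∀ p ∈ Pi, p ∉ S) (hq : ∀ q ∈ S, ¬ FAntiRefutable Γ Γ ((insert q Pi).image atom) ∅) :
    FMostConsistentModel {V4.b} I Γ := by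
  refine ⟨hI, fun ⟨J, hJ, hsub, hnot⟩ => ?_⟩
  obtain ⟨q, hIq, hJq⟩ := Set.not_subset.1 hnot
  refine hq q (hS q hIq) ⟨J, fAntiRefutedBy_model_iff.2 ⟨hJ, ?_⟩⟩
  exact (Finset.forall_mem_insert _ _ _).2 ⟨hJq, fun p hp hJp => hPi p hp (hS p (hsub hJp))⟩

theorem MEF1.sound {S Pi Θ : Finset ℕ} {Γ Δ : Finset FForm} (h : MEF1 S Γ Pi Δ Θ) :
    Γ.biUnion fvars ⊆ S ∪ Pi ∪ Θ → MESeqValid S Γ Pi Δ := by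
  induction h with
  | @m1 S Pi Θ Γ Δ q hRF =>
    intro hvars I hI hS _
    exfalso
    obtain ⟨J, hJ⟩ := hRF.sound
    obtain ⟨hJΓ, hJb⟩ := fAntiRefutedBy_model_iff.1 hJ
    set J' := (insert q S ∪ Pi ∪ Θ).piecewise J fun _ => .n
    have hsub : ∀ p, J' p = .b → I p = .b := fun p hp => by
      obtain ⟨hpX, hJp⟩ := piecewise_n_eq_b.1 hp
      exact hS p (by grind)
    have hJ'q := hI.eq_b_of_subset ((isModelSet_piecewise hvars).2 hJΓ) hsub
      (hS q (Finset.mem_insert_self q S))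
    exact hJb q (Finset.mem_insert_self _ _) (piecewise_n_eq_b.1 hJ'q).2
  | m2 hSF =>
    intro _ I hI hS hPi
    by_contra! hΔ
    exact fAntiRefutedBy_iff_not_fSeqTrue.1
      (fAntiRefutedBy_countermodel_iff.2 ⟨hS, hI.1, hPi, hΔ⟩) (hSF.sound I)
  | @m3 S Pi Θ Γ Δ q _ _ ih₁ ih₂ =>
    intro hvars I hI hS hPi
    by_cases hq : I q = .b
    · exact ih₁ (by grind) I hI (by grind) hPi
    · exact ih₂ (by grind) I hI hS (by grind)

theorem MEF1.of_meSeqValid_empty {S Pi : Finset ℕ} {Γ Δ : Finset FForm}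
    (hvalid : MESeqValid S Γ Pi Δ) (hvars : (Γ ∪ Δ).biUnion fvars ⊆ S ∪ Pi) :
    MEF1 S Γ Pi Δ ∅ := by
  by_cases hq : ∃ q ∈ S, FAntiRefutable Γ Γ ((insert q Pi).image atom) ∅
  · obtain ⟨q, hqS, hq⟩ := hq
    rw [← Finset.insert_erase hqS]
    exact .m1 (by simpa using RF.complete hq)
  refine .m2 (SF.complete fun I => ?_)
  by_contra hI
  obtain ⟨hS, hΓ, hPi, hΔ⟩ :=
    fAntiRefutedBy_countermodel_iff.1 (fAntiRefutedBy_iff_not_fSeqTrue.2 hI)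
  set I' := (S ∪ Pi).piecewise I fun _ => .n
  have hΓvars : Γ.biUnion fvars ⊆ S ∪ Pi :=
    (Finset.biUnion_subset_biUnion_of_subset_left _ Finset.subset_union_left).trans hvars
  have hI' : FMostConsistentModel {V4.b} I' Γ := by
    refine fMostConsistentModel_of_not_fAntiRefutable ((isModelSet_piecewise hΓvars).2 hΓ)
      (fun p hp => ?_) (fun p hp hpS => hPi p hp (hS p hpS))
      fun q hqS href => hq ⟨q, hqS, href⟩
    obtain ⟨hpX, hIp⟩ := piecewise_n_eq_b.1 hp
    exact (Finset.mem_union.1 hpX).resolve_right fun hpPi => hPi p hpPi hIp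
  obtain ⟨δ, hδ, hδI'⟩ := hvalid I' hI'
    (fun p hp => piecewise_n_eq_b.2 ⟨Finset.mem_union_left _ hp, hS p hp⟩)
    (fun p hp h => hPi p hp (piecewise_n_eq_b.1 h).2)
  have hδvars := (Finset.subset_biUnion_of_mem fvars (Finset.mem_union_right Γ hδ)).trans hvars
  exact hΔ δ hδ ((isModel_piecewise hδvars).1 hδI')

theorem MEF1.of_meSeqValid {S Pi Θ : Finset ℕ} {Γ Δ : Finset FForm}
    (hvalid : MESeqValid S Γ Pi Δ) (hvars : (Γ ∪ Δ).biUnion fvars ⊆ S ∪ Pi ∪ Θ) :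
    MEF1 S Γ Pi Δ Θ := by
  induction Θ using Finset.induction_on generalizing S Pi with
  | empty => exact .of_meSeqValid_empty hvalid (by simpa using hvars)
  | insert q Θ _ ih =>
    exact .m3 (ih (hvalid.mono (Finset.subset_insert q S) subset_rfl) (by grind))
      (ih (hvalid.mono subset_rfl (Finset.subset_insert q Pi)) (by grind))

/-- Adequacy of `ME_F¹` for four-valued minimal entailment with `𝓘 = {b}`:
for finite F-theories `Γ` and `Δ`, `Γ ⊨^{b}_F Δ` iff the sequent
`∅;Γ,∅̄⇒Δ;Var(Γ∪Δ)` is provable in `ME_F¹`. -/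
theorem MEF1_adequate (Γ Δ : Finset FForm) :
    FMinEntails {V4.b} (Γ : Set FForm) (Δ : Set FForm) ↔
      MEF1 ∅ Γ ∅ Δ ((Γ ∪ Δ).biUnion FForm.fvars) := by
  rw [fMinEntails_iff_meSeqValid]
  refine ⟨fun h => .of_meSeqValid h (by simp), fun h => h.sound ?_⟩
  simpa using Finset.biUnion_subset_biUnion_of_subset_left _ Finset.subset_union_left
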